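/- arXiv:math/0009055 — 2 statements merged into one kernel-verified Lean document; each statement's English description precedes it below -/
import Mathlib

section
/- If $N$ is a normal subgroup of $G$ contained in $\ker\xi$, then the map $\varepsilon: \widehat{RG}_\xi \to \widehat{R(G/N)}_{\bar\xi}$ defined by $\varepsilon(\lambda)(gN) = \sum_{n \in N} \lambda(gn)$ is a well-defined surjective ring homomorphism, where $\bar\xi: G/N \to \mathbb{R}$ is induced by $\xi$. -/
/-!
Since `ξ` is constant on each coset `gN`, the Novikov condition for `λ` bounds the support of
`λ` on `gN` inside a finite set, so `ε(λ)(gN)` is a finite sum, and `ε(λ)` again satisfies the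
Novikov condition. Multiplicativity is a Fubini argument: `ε(λ₁λ₂)(q)` and `(ελ₁ · ελ₂)(q)`
both equal `∑_h λ₁(h) ε(λ₂)((hN)⁻¹q)`. All double sums involved are finite because only
finitely many pairs `(a, b)` with `λ₁(a) λ₂(b) ≠ 0` have `ξ(a) + ξ(b)` bounded below.
A preimage of `μ` is the function equal to `μ(gN)` at the chosen representative of each coset
`gN` and zero elsewhere.
-/

noncomputable section
open scoped Classical

/-- Novikov finiteness condition. -/
def NovCond {G R : Type*} [Group G] [Ring R] (ξ : G → ℝ) (l : G → R) : Prop :=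
  ∀ r : ℝ, {g : G | l g ≠ 0 ∧ r ≤ ξ g}.Finite

/-- Convolution product. -/
def conv {G R : Type*} [Group G] [Ring R] (l₁ l₂ : G → R) : G → R :=
  fun g => ∑ᶠ h : G, l₁ h * l₂ (h⁻¹ * g)

/-- `ε(λ)(gN) = ∑_{n ∈ N} λ(gn)`. -/
def epsQuot {G R : Type*} [Group G] [Ring R] (N : Subgroup G) (l : G → R) :
    G ⧸ N → R :=
  fun q => ∑ᶠ n : N, l (q.out * (n : G))

/-- The homomorphism `G/N → ℝ` induced by `ξ`. -/
def xiBar {G : Type*} [Group G] (ξ : G → ℝ) (N : Subgroup G) : G ⧸ N → ℝ :=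
  fun q => ξ q.out

open Function QuotientGroup

theorem finsum_comm_of_hasFiniteSupport {α β M : Type*} [AddCommMonoid M] (f : α → β → M)
    (hf : HasFiniteSupport (uncurry f)) : ∑ᶠ a, ∑ᶠ b, f a b = ∑ᶠ b, ∑ᶠ a, f a b := by
  calc ∑ᶠ a, ∑ᶠ b, f a b = ∑ᶠ p : α × β, uncurry f p := (finsum_curry _ hf).symm
    _ = ∑ᶠ p : β × α, uncurry f p.swap := (finsum_comp_equiv (Equiv.prodComm β α)).symm
    _ = ∑ᶠ b, ∑ᶠ a, f a b :=
      finsum_curry _ (hf.comp_of_injective (Equiv.prodComm β α).injective)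

namespace QuotientGroup

variable {G : Type*} [Group G] {N : Subgroup G}

theorem mk_out_mul (q : G ⧸ N) {n : G} (hn : n ∈ N) : (mk (q.out * n) : G ⧸ N) = q := by
  rw [← (QuotientGroup.eq (a := q.out)).mpr (by simpa using hn), out_eq']

variable (N) in
def outMulEquiv : (G ⧸ N) × N ≃ G where
  toFun p := p.1.out * p.2
  invFun g := (mk g, ⟨(mk g : G ⧸ N).out⁻¹ * g, QuotientGroup.eq.mp (out_eq' _)⟩)
  left_inv := by
    rintro ⟨q, n⟩
    ext
    · exact mk_out_mul q n.2
    · simp [mk_out_mul q n.2]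
  right_inv g := by simp

end QuotientGroup

section Novikov

variable {R : Type*} [Ring R]

theorem NovCond.finite_pairs {A B : Type*} [Group A] [Group B] {ξ₁ : A → ℝ} {ξ₂ : B → ℝ}
    {f : A → R} {g : B → R} (hf : NovCond ξ₁ f) (hg : NovCond ξ₂ g) (c : ℝ) :
    {p : A × B | f p.1 ≠ 0 ∧ g p.2 ≠ 0 ∧ c ≤ ξ₁ p.1 + ξ₂ p.2}.Finite := by
  -- one of the two heights is at least `c / 2`, and then the other is bounded below
  have hA : (⋃ a ∈ {a | f a ≠ 0 ∧ c / 2 ≤ ξ₁ a}, {a} ×ˢ {b | g b ≠ 0 ∧ c - ξ₁ a ≤ ξ₂ b}).Finite :=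
    (hf (c / 2)).biUnion fun a _ => (Set.finite_singleton a).prod (hg _)
  have hB : (⋃ b ∈ {b | g b ≠ 0 ∧ c / 2 ≤ ξ₂ b}, {a | f a ≠ 0 ∧ c - ξ₂ b ≤ ξ₁ a} ×ˢ {b}).Finite :=
    (hg (c / 2)).biUnion fun b _ => (hf _).prod (Set.finite_singleton b)
  refine (hA.union hB).subset ?_
  rintro ⟨a, b⟩ ⟨hfa, hgb, hc⟩
  rcases le_or_gt (c / 2) (ξ₁ a) with h | h
  · exact Or.inl (Set.mem_biUnion ⟨hfa, h⟩ ⟨rfl, hgb, by linarith⟩)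
  · exact Or.inr (Set.mem_biUnion ⟨hgb, by linarith⟩ ⟨⟨hfa, by linarith⟩, rfl⟩)

theorem NovCond.hasFiniteSupport_mul_comp {A B C : Type*} [Group A] [Group B]
    {ξ₁ : A → ℝ} {ξ₂ : B → ℝ} {f : A → R} {g : B → R} (hf : NovCond ξ₁ f) (hg : NovCond ξ₂ g)
    {φ : C → A} {ψ : C → B} (hinj : Injective fun x => (φ x, ψ x)) (c : ℝ)
    (hc : ∀ x, c ≤ ξ₁ (φ x) + ξ₂ (ψ x)) : HasFiniteSupport fun x => f (φ x) * g (ψ x) :=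
  ((hf.finite_pairs hg c).preimage hinj.injOn).subset fun x hx =>
    ⟨left_ne_zero_of_mul hx, right_ne_zero_of_mul hx, hc x⟩

end Novikov

section Quotient

variable {G R : Type*} [Group G] [Ring R] {ξ : G → ℝ} {N : Subgroup G}

theorem xiBar_mk (hξ : ∀ a b : G, ξ (a * b) = ξ a + ξ b) (hN : ∀ n ∈ N, ξ n = 0) (g : G) :
    xiBar ξ N (mk g) = ξ g := by
  obtain ⟨n, hn⟩ := mk_out_eq_mul N g
  rw [xiBar, hn, hξ, hN n n.2, add_zero]

theorem xiBar_mul [N.Normal] (hξ : ∀ a b : G, ξ (a * b) = ξ a + ξ b) (hN : ∀ n ∈ N, ξ n = 0)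
    (a b : G ⧸ N) : xiBar ξ N (a * b) = xiBar ξ N a + xiBar ξ N b := by
  induction a using QuotientGroup.induction_on
  induction b using QuotientGroup.induction_on
  rw [← mk_mul, xiBar_mk hξ hN, xiBar_mk hξ hN, xiBar_mk hξ hN, hξ]

theorem NovCond.hasFiniteSupport_coset (hξ : ∀ a b : G, ξ (a * b) = ξ a + ξ b)
    (hN : ∀ n ∈ N, ξ n = 0) {l : G → R} (hl : NovCond ξ l) (g : G) :
    HasFiniteSupport fun n : N => l (g * n) :=
  ((hl (ξ g)).preimage (mul_right_injective g |>.comp Subtype.val_injective).injOn).subset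
    fun n hn => ⟨hn, by simp [hξ, hN n n.2]⟩

theorem NovCond.epsQuot [N.Normal] (hξ : ∀ a b : G, ξ (a * b) = ξ a + ξ b)
    (hN : ∀ n ∈ N, ξ n = 0) {l : G → R} (hl : NovCond ξ l) : NovCond (xiBar ξ N) (epsQuot N l) := by
  intro r
  refine ((hl r).image mk).subset ?_
  rintro q ⟨hne, hr⟩
  obtain ⟨n, hn⟩ : ∃ n : N, l (q.out * n) ≠ 0 := by
    by_contra! h
    exact hne (finsum_eq_zero_of_forall_eq_zero h)
  refine ⟨q.out * n, ⟨hn, ?_⟩, mk_out_mul q n.2⟩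
  rwa [← xiBar_mk hξ hN, mk_out_mul q n.2]

theorem epsQuot_mk (N : Subgroup G) (l : G → R) (g : G) :
    epsQuot N l (mk g) = ∑ᶠ n : N, l (g * n) := by
  obtain ⟨n₀, hn₀⟩ := mk_out_eq_mul N g
  rw [epsQuot, hn₀]
  simpa [mul_assoc] using finsum_comp_equiv (Equiv.mulLeft n₀) (f := fun n : N => l (g * n))

theorem finsum_epsQuot {l : G → R} (hl : HasFiniteSupport l) :
    ∑ᶠ q, epsQuot N l q = ∑ᶠ g, l g := by
  rw [← finsum_comp_equiv (outMulEquiv N),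
    finsum_curry (fun p => l (outMulEquiv N p)) (hl.comp_of_injective (outMulEquiv N).injective)]
  rfl

theorem epsQuot_add {l₁ l₂ : G → R} (hl₁ : ∀ g, HasFiniteSupport fun n : N => l₁ (g * n))
    (hl₂ : ∀ g, HasFiniteSupport fun n : N => l₂ (g * n)) :
    epsQuot N (l₁ + l₂) = epsQuot N l₁ + epsQuot N l₂ :=
  funext fun q => finsum_add_distrib (hl₁ q.out) (hl₂ q.out)

theorem epsQuot_mul_comp_mk {l : G → R} (hl : ∀ g, HasFiniteSupport fun n : N => l (g * n))
    (c : G ⧸ N → R) (q : G ⧸ N) :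
    epsQuot N (fun g => l g * c (mk g)) q = epsQuot N l q * c q := by
  rw [epsQuot, epsQuot, finsum_mul' _ _ (hl q.out)]
  exact finsum_congr fun n => by rw [mk_out_mul q n.2]

theorem epsQuot_conv [N.Normal] (hξ : ∀ a b : G, ξ (a * b) = ξ a + ξ b) (hN : ∀ n ∈ N, ξ n = 0)
    {l₁ l₂ : G → R} (hl₁ : NovCond ξ l₁) (hl₂ : NovCond ξ l₂) :
    epsQuot N (conv l₁ l₂) = conv (epsQuot N l₁) (epsQuot N l₂) := by
  funext q
  have hsupp : HasFiniteSupport fun h => l₁ h * epsQuot N l₂ ((mk h)⁻¹ * q) :=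
    hl₁.hasFiniteSupport_mul_comp (hl₂.epsQuot hξ hN) (φ := id)
      (fun _ _ h => congrArg Prod.fst h) (xiBar ξ N q) fun h => by
        rw [id, ← xiBar_mk hξ hN h, ← xiBar_mul hξ hN, mul_inv_cancel_left]
  have hsupp₂ : HasFiniteSupport (uncurry fun (n : N) h => l₁ h * l₂ (h⁻¹ * (q.out * n))) :=
    hl₁.hasFiniteSupport_mul_comp hl₂ (φ := Prod.snd)
      (by
        rintro ⟨n, h⟩ ⟨n', h'⟩ he
        obtain ⟨rfl, he⟩ := Prod.mk.inj he
        simpa using he)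
      (ξ q.out) fun x => by rw [← hξ, mul_inv_cancel_left, hξ, hN _ x.1.2, add_zero]
  calc epsQuot N (conv l₁ l₂) q
      = ∑ᶠ h, ∑ᶠ n : N, l₁ h * l₂ (h⁻¹ * (q.out * n)) :=
        finsum_comm_of_hasFiniteSupport _ hsupp₂
    _ = ∑ᶠ h, l₁ h * epsQuot N l₂ ((mk h)⁻¹ * q) := finsum_congr fun h => by
        have hq : (mk h)⁻¹ * q = mk (h⁻¹ * q.out) := by rw [mk_mul, mk_inv, out_eq']
        rw [hq, epsQuot_mk, mul_finsum' _ _ (hl₂.hasFiniteSupport_coset hξ hN _)]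
        simp only [mul_assoc]
    _ = ∑ᶠ p, epsQuot N (fun h => l₁ h * epsQuot N l₂ ((mk h)⁻¹ * q)) p :=
        (finsum_epsQuot hsupp).symm
    _ = conv (epsQuot N l₁) (epsQuot N l₂) q := finsum_congr fun p =>
        epsQuot_mul_comp_mk (hl₁.hasFiniteSupport_coset hξ hN) (fun p => epsQuot N l₂ (p⁻¹ * q)) p

theorem epsQuot_single_one [N.Normal] :
    epsQuot N (fun g : G => if g = 1 then (1 : R) else 0) = fun q => if q = 1 then 1 else 0 := by
  funext q
  induction q using QuotientGroup.induction_on with | H g => ?_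
  rw [epsQuot_mk]
  by_cases hg : g ∈ N
  · rw [if_pos ((eq_one_iff g).mpr hg), finsum_eq_single _ ⟨g⁻¹, inv_mem hg⟩]
    · simp
    · intro n hn
      rw [if_neg fun h => hn (Subtype.ext (eq_inv_of_mul_eq_one_right h))]
  · rw [if_neg (mt (eq_one_iff g).mp hg)]
    refine finsum_eq_zero_of_forall_eq_zero fun n => if_neg fun h => hg ?_
    rw [eq_inv_of_mul_eq_one_left h]
    exact inv_mem n.2

variable (N) in
def outLift (m : G ⧸ N → R) : G → R := fun g => if (mk g : G ⧸ N).out = g then m (mk g) else 0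

theorem NovCond.outLift [N.Normal] {m : G ⧸ N → R} (hm : NovCond (xiBar ξ N) m) :
    NovCond ξ (outLift N m) := by
  intro r
  refine ((hm r).image Quotient.out).subset ?_
  rintro g ⟨hne, hr⟩
  by_cases hout : (mk g : G ⧸ N).out = g
  · exact ⟨mk g, ⟨fun h0 => hne ((if_pos hout).trans h0), by rwa [xiBar, hout]⟩, hout⟩
  · exact absurd (if_neg hout) hne

theorem epsQuot_outLift (m : G ⧸ N → R) : epsQuot N (outLift N m) = m := by
  funext q
  rw [epsQuot, finsum_eq_single _ 1]
  · rw [OneMemClass.coe_one, mul_one, outLift, out_eq', if_pos rfl]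
  · intro n hn
    rw [outLift, mk_out_mul q n.2, if_neg]
    exact fun h => hn (Subtype.ext (left_eq_mul.mp h))

end Quotient

/-- For a normal subgroup `N ⊆ ker ξ`, the map `ε : R̂G_ξ → R̂(G/N)_ξ̄`,
`ε(λ)(gN) = ∑_{n∈N} λ(gn)`, is well defined (the sums are finite and the result
satisfies the Novikov condition for the induced homomorphism `ξ̄`), and is a
surjective ring homomorphism. -/
theorem eps_quotient_ring_hom
    {G R : Type*} [Group G] [Ring R] (ξ : G → ℝ)
    (hξ : ∀ a b : G, ξ (a * b) = ξ a + ξ b)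
    (N : Subgroup G) [N.Normal] (hN : ∀ n ∈ N, ξ n = 0) :
    (∀ g : G, xiBar ξ N (QuotientGroup.mk g) = ξ g) ∧
    (∀ a b : G ⧸ N, xiBar ξ N (a * b) = xiBar ξ N a + xiBar ξ N b) ∧
    (∀ (l : G → R), NovCond ξ l →
      ∀ q : G ⧸ N, {n : N | l (q.out * (n : G)) ≠ 0}.Finite) ∧
    (∀ (l : G → R), NovCond ξ l → NovCond (xiBar ξ N) (epsQuot N l)) ∧
    (∀ (l₁ l₂ : G → R), NovCond ξ l₁ → NovCond ξ l₂ →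
      epsQuot N (l₁ + l₂) = epsQuot N l₁ + epsQuot N l₂) ∧
    (∀ (l₁ l₂ : G → R), NovCond ξ l₁ → NovCond ξ l₂ →
      epsQuot N (conv l₁ l₂) = conv (epsQuot N l₁) (epsQuot N l₂)) ∧
    (epsQuot N (fun g : G => if g = 1 then (1 : R) else 0) =
      fun q : G ⧸ N => if q = 1 then (1 : R) else 0) ∧
    (∀ m : G ⧸ N → R, NovCond (xiBar ξ N) m →
      ∃ l : G → R, NovCond ξ l ∧ epsQuot N l = m) :=
  ⟨xiBar_mk hξ hN, xiBar_mul hξ hN,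
    fun _ hl q => hl.hasFiniteSupport_coset hξ hN q.out,
    fun _ hl => hl.epsQuot hξ hN,
    fun _ _ hl₁ hl₂ =>
      epsQuot_add (hl₁.hasFiniteSupport_coset hξ hN) (hl₂.hasFiniteSupport_coset hξ hN),
    fun _ _ hl₁ hl₂ => epsQuot_conv hξ hN hl₁ hl₂,
    epsQuot_single_one,
    fun m hm => ⟨outLift N m, hm.outLift, epsQuot_outLift m⟩⟩
end
end

section
/- Let $v$ be a vector field on a smooth manifold and $\omega$ a Morse form. Suppose (1) for every critical point $p$ of $\omega$ there is a neighborhood $U_p$ and a Riemannian metric $g_p$ on $U_p$ with $\omega_x(X) = g_p(X, v(x))$ for $x \in U_p$; and (2) $\omega_x(v(x)) > 0$ whenever $\omega_x \neq 0$. Then there exists a global Riemannian metric $g$ on $M$ with $\omega_x(X) = g(X, v(x))$ for all $x \in M$, $X \in T_xM$; i.e., $v$ is an $\omega$-gradient. -/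
/-!
At a point where `φ = ω_x` does not vanish, `w = v(x)` satisfies `φ w > 0`, so for any inner
product `B` the projection `P = id - φ(·)/φ(w) • w` onto `ker φ` along `w` is defined and
`g = B(P·, P·) + φ ⊗ φ / φ(w)` is positive definite (the first term on `ker φ`, the second
off it). Since `P w = 0`, `g(X, w) = φ(X)`, and `g` depends smoothly on `x`. Near the zeros
of `ω` such metrics are given, and the metrics realising `v(x)` as the gradient of `ω_x` form
a convex set, so a partition of unity glues the local metrics into a global one.
-/

noncomputable section
open scoped Manifold

/-- A continuous bilinear form is symmetric and positive definite. -/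
def PosDefSym {E : Type*} [NormedAddCommGroup E] [NormedSpace ℝ E]
    (b : E →L[ℝ] E →L[ℝ] ℝ) : Prop :=
  (∀ X Y : E, b X Y = b Y X) ∧ (∀ X : E, X ≠ 0 → 0 < b X X)

theorem exists_posDefSym (E : Type*) [NormedAddCommGroup E] [NormedSpace ℝ E]
    [FiniteDimensional ℝ E] : ∃ b : E →L[ℝ] E →L[ℝ] ℝ, PosDefSym b := by
  let e := (toEuclidean (E := E)).toContinuousLinearMap
  refine ⟨(innerSL ℝ).bilinearComp e e, fun X Y => real_inner_comm (e Y) (e X), fun X hX => ?_⟩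
  show 0 < inner ℝ (e X) (e X)
  exact real_inner_self_pos.2 (by simpa [e] using hX)

section GradientMetric

variable {E : Type*} [NormedAddCommGroup E] [NormedSpace ℝ E]

theorem PosDefSym.nonneg {b : E →L[ℝ] E →L[ℝ] ℝ} (hb : PosDefSym b) (X : E) : 0 ≤ b X X := by
  rcases eq_or_ne X 0 with rfl | hX
  · simp
  · exact (hb.2 X hX).le

theorem convex_setOf_posDefSym : Convex ℝ {b : E →L[ℝ] E →L[ℝ] ℝ | PosDefSym b} := by
  intro b₁ hb₁ b₂ hb₂ s t hs ht hst
  refine ⟨fun X Y => by simp [hb₁.1 X Y, hb₂.1 X Y], fun X hX => ?_⟩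
  have h₁ := hb₁.2 X hX
  have h₂ := hb₂.2 X hX
  simp only [add_apply, smul_apply, smul_eq_mul]
  nlinarith [mul_le_mul_of_nonneg_left (min_le_left (b₁ X X) (b₂ X X)) hs,
    mul_le_mul_of_nonneg_left (min_le_right (b₁ X X) (b₂ X X)) ht, lt_min h₁ h₂]

def metricsWithGradient (φ : E →L[ℝ] ℝ) (w : E) : Set (E →L[ℝ] E →L[ℝ] ℝ) :=
  {b | PosDefSym b ∧ ∀ X, φ X = b X w}

theorem convex_metricsWithGradient (φ : E →L[ℝ] ℝ) (w : E) :
    Convex ℝ (metricsWithGradient φ w) := by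
  refine convex_setOf_posDefSym.inter fun b₁ hb₁ b₂ hb₂ s t _ _ hst X => ?_
  simp only [add_apply, smul_apply, smul_eq_mul, ← hb₁ X, ← hb₂ X]
  linear_combination φ X * hst.symm

def kerProj (φ : E →L[ℝ] ℝ) (w : E) : E →L[ℝ] E :=
  ContinuousLinearMap.id ℝ E - ((φ w)⁻¹ • φ).smulRight w

theorem kerProj_apply (φ : E →L[ℝ] ℝ) (w X : E) : kerProj φ w X = X - ((φ w)⁻¹ * φ X) • w := by
  simp [kerProj, mul_smul]

theorem kerProj_apply_self {φ : E →L[ℝ] ℝ} {w : E} (h : φ w ≠ 0) : kerProj φ w w = 0 := by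
  simp [kerProj_apply, inv_mul_cancel₀ h]

theorem kerProj_apply_of_apply_eq_zero (φ : E →L[ℝ] ℝ) (w : E) {X : E} (hX : φ X = 0) :
    kerProj φ w X = X := by
  simp [kerProj_apply, hX]

def gradientMetric (B : E →L[ℝ] E →L[ℝ] ℝ) (φ : E →L[ℝ] ℝ) (w : E) : E →L[ℝ] E →L[ℝ] ℝ :=
  B.bilinearComp (kerProj φ w) (kerProj φ w) + ((φ w)⁻¹ • φ).smulRight φ

theorem gradientMetric_apply (B : E →L[ℝ] E →L[ℝ] ℝ) (φ : E →L[ℝ] ℝ) (w X Y : E) :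
    gradientMetric B φ w X Y = B (kerProj φ w X) (kerProj φ w Y) + (φ w)⁻¹ * φ X * φ Y := by
  simp [gradientMetric]

theorem gradientMetric_apply_right (B : E →L[ℝ] E →L[ℝ] ℝ) {φ : E →L[ℝ] ℝ} {w : E}
    (h : φ w ≠ 0) (X : E) : gradientMetric B φ w X w = φ X := by
  rw [gradientMetric_apply, kerProj_apply_self h, map_zero]
  field_simp
  ring

theorem posDefSym_gradientMetric {B : E →L[ℝ] E →L[ℝ] ℝ} (hB : PosDefSym B) {φ : E →L[ℝ] ℝ}
    {w : E} (h : 0 < φ w) : PosDefSym (gradientMetric B φ w) := by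
  refine ⟨fun X Y => ?_, fun X hX => ?_⟩
  · rw [gradientMetric_apply, gradientMetric_apply, hB.1, mul_right_comm _ (φ X)]
  rw [gradientMetric_apply]
  rcases eq_or_ne (φ X) 0 with hφX | hφX
  · rw [kerProj_apply_of_apply_eq_zero φ w hφX, hφX]
    simpa using hB.2 X hX
  · have hP := hB.nonneg (kerProj φ w X)
    have hφ : 0 < (φ w)⁻¹ * φ X * φ X := by
      rw [mul_assoc]
      exact mul_pos (inv_pos.2 h) (mul_self_pos.2 hφX)
    linarith

theorem gradientMetric_mem_metricsWithGradient {B : E →L[ℝ] E →L[ℝ] ℝ} (hB : PosDefSym B)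
    {φ : E →L[ℝ] ℝ} {w : E} (h : 0 < φ w) : gradientMetric B φ w ∈ metricsWithGradient φ w :=
  ⟨posDefSym_gradientMetric hB h, fun X => (gradientMetric_apply_right B h.ne' X).symm⟩

theorem contDiff_bilinearComp_self {F G : Type*} [NormedAddCommGroup F] [NormedSpace ℝ F]
    [NormedAddCommGroup G] [NormedSpace ℝ G] (B : F →L[ℝ] F →L[ℝ] G) {n : WithTop ℕ∞} :
    ContDiff ℝ n (fun P : E →L[ℝ] F => B.bilinearComp P P) := by
  have h : (fun P : E →L[ℝ] F => B.bilinearComp P P) =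
      fun P => (ContinuousLinearMap.compL ℝ E F G).flip P ∘L (B ∘L P) := by
    ext; rfl
  rw [h]
  exact (contDiff_const.clm_apply contDiff_id).clm_comp (contDiff_const.clm_comp contDiff_id)

theorem contDiffAt_gradientMetric (B : E →L[ℝ] E →L[ℝ] ℝ) {n : WithTop ℕ∞}
    {p : (E →L[ℝ] ℝ) × E} (hp : p.1 p.2 ≠ 0) :
    ContDiffAt ℝ n (fun q : (E →L[ℝ] ℝ) × E => gradientMetric B q.1 q.2) p := by
  have hc : ContDiffAt ℝ n (fun q : (E →L[ℝ] ℝ) × E => (q.1 q.2)⁻¹ • q.1) p :=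
    ((contDiffAt_inv ℝ hp).comp p (contDiff_fst.clm_apply contDiff_snd).contDiffAt).smul
      contDiffAt_fst
  have hP : ContDiffAt ℝ n (fun q : (E →L[ℝ] ℝ) × E => kerProj q.1 q.2) p :=
    contDiffAt_const.sub (hc.smulRight contDiffAt_snd)
  exact ((contDiff_bilinearComp_self B).contDiffAt.comp p hP).add (hc.smulRight contDiffAt_fst)

end GradientMetric

section Manifold

open scoped Topology

variable {E : Type*} [NormedAddCommGroup E] [NormedSpace ℝ E]
  {H : Type*} [TopologicalSpace H] {I : ModelWithCorners ℝ E H}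
  {M : Type*} [TopologicalSpace M] [ChartedSpace H M] {n : WithTop ℕ∞}
  {ω : M → E →L[ℝ] ℝ} {v : M → E}

theorem exists_contMDiffOn_gradientMetric {B : E →L[ℝ] E →L[ℝ] ℝ} (hB : PosDefSym B)
    (hω : ContMDiff I 𝓘(ℝ, E →L[ℝ] ℝ) n ω) (hv : ContMDiff I 𝓘(ℝ, E) n v) {x : M}
    (hx : 0 < ω x (v x)) :
    ∃ U ∈ 𝓝 x, ∃ g : M → E →L[ℝ] E →L[ℝ] ℝ, ContMDiffOn I 𝓘(ℝ, E →L[ℝ] E →L[ℝ] ℝ) n g U ∧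
      ∀ y ∈ U, g y ∈ metricsWithGradient (ω y) (v y) := by
  refine ⟨{y | 0 < ω y (v y)}, ?_, fun y => gradientMetric B (ω y) (v y), fun y hy => ?_,
    fun y hy => gradientMetric_mem_metricsWithGradient hB hy⟩
  · exact (isOpen_lt continuous_const (hω.clm_apply hv).continuous).mem_nhds hx
  · exact ((contDiffAt_gradientMetric (p := (ω y, v y)) B (ne_of_gt hy)).comp_contMDiffAt
      (f := fun z => (ω z, v z)) (hω.prodMk_space hv).contMDiffAt).contMDiffWithinAt

end Manifold

/-- Lemma (gradient recognition): let `ω` be a (Morse) 1-form and `v` a vector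
field on a closed manifold `M`.  If (1) around every critical point of `ω`
there is a neighbourhood carrying a Riemannian metric turning `v` into the
gradient of `ω`, and (2) `ω(v) > 0` wherever `ω ≠ 0`, then there is a global
Riemannian metric `g` with `ω_x(X) = g(X, v(x))` for all `x`, `X`; i.e. `v` is
an `ω`-gradient.  (Tangent spaces are identified with the model space `E`.) -/
theorem omega_gradient_of_local_conditions
    {E : Type*} [NormedAddCommGroup E] [NormedSpace ℝ E] [FiniteDimensional ℝ E]
    {H : Type*} [TopologicalSpace H] (I : ModelWithCorners ℝ E H)
    {M : Type*} [TopologicalSpace M] [ChartedSpace H M]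
    [IsManifold I (⊤ : ℕ∞) M] [CompactSpace M] [T2Space M]
    (ω : M → (E →L[ℝ] ℝ)) (v : M → E)
    (hω : ContMDiff I 𝓘(ℝ, E →L[ℝ] ℝ) (⊤ : ℕ∞) ω)
    (hv : ContMDiff I 𝓘(ℝ, E) (⊤ : ℕ∞) v)
    (h1 : ∀ p : M, ω p = 0 →
      ∃ U : Set M, IsOpen U ∧ p ∈ U ∧
        ∃ g : M → (E →L[ℝ] E →L[ℝ] ℝ),
          ContMDiffOn I 𝓘(ℝ, E →L[ℝ] E →L[ℝ] ℝ) (⊤ : ℕ∞) g U ∧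
          ∀ x ∈ U, PosDefSym (g x) ∧ ∀ X : E, ω x X = g x X (v x))
    (h2 : ∀ x : M, ω x ≠ 0 → 0 < ω x (v x)) :
    ∃ g : M → (E →L[ℝ] E →L[ℝ] ℝ),
      ContMDiff I 𝓘(ℝ, E →L[ℝ] E →L[ℝ] ℝ) (⊤ : ℕ∞) g ∧
      ∀ x : M, PosDefSym (g x) ∧ ∀ X : E, ω x X = g x X (v x) := by
  obtain ⟨B, hB⟩ := exists_posDefSym E
  obtain ⟨g, hg⟩ := exists_contMDiffMap_forall_mem_convex_of_local I
    (t := fun x => metricsWithGradient (ω x) (v x))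
    (fun x => convex_metricsWithGradient (ω x) (v x)) fun x => by
      by_cases hx : ω x = 0
      · obtain ⟨U, hU, hxU, g, hg, hgU⟩ := h1 x hx
        exact ⟨U, hU.mem_nhds hxU, g, hg, hgU⟩
      · exact exists_contMDiffOn_gradientMetric hB hω hv (h2 x hx)
  exact ⟨g, g.contMDiff, hg⟩
end
end
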